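/- arXiv:1606.05101 — 2 statements merged into one kernel-verified Lean document; each statement's English description precedes it below -/
import Mathlib

section
/- Suppose $H, \phi, \rho, a$ are continuous on $[0,\infty)$ with $H(t)^2 = \frac{1}{3}(\rho(t) + \phi(t)) - k/a(t)^2$ where $k \in \{0,-1\}$, $\rho(t) \ge 0$, $\phi$ nonincreasing with $\lim_{t\to\infty} \phi(t) = \phi_\infty > 0$, and $H(0) > 0$ with $H$ never vanishing. Then $H(t) \ge \sqrt{\phi_\infty/3}$ for all $t \ge 0$, and consequently $a(t) \ge a(0) e^{\sqrt{\phi_\infty/3}\, t}$ where $\dot a = H a$ and $a(0) > 0$. -/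
/-!
Since `φ` decreases to `φinf`, we have `φ ≥ φinf`; with `ρ ≥ 0` and `-k/a² ≥ 0` the constraint
gives `H² ≥ φinf/3`. A continuous nonvanishing `H` cannot change sign on `[0, ∞)`, so `H > 0` and
hence `H ≥ √(φinf/3) =: c`. Then `a(t) e^{-ct}` has derivative `(H - c) a e^{-ct} ≥ 0`, so it is
nondecreasing, which is the exponential lower bound.
-/

open Set Filter

theorem AntitoneOn.le_of_tendsto_atTop {α β : Type*} [Preorder α] [IsDirectedOrder α]
    [Preorder β] [TopologicalSpace β] [ClosedIicTopology β] {f : α → β} {t₀ t : α} {L : β}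
    (hf : AntitoneOn f (Ici t₀)) (ht : t₀ ≤ t) (hL : Tendsto f atTop (nhds L)) : L ≤ f t :=
  have : Nonempty α := ⟨t⟩
  le_of_tendsto hL <| (eventually_ge_atTop t).mono fun _ hs => hf ht (ht.trans hs) hs

theorem IsPreconnected.pos_of_ne_zero {X : Type*} [TopologicalSpace X] {s : Set X}
    (hs : IsPreconnected s) {f : X → ℝ} (hf : ContinuousOn f s) (hne : ∀ x ∈ s, f x ≠ 0)
    {x₀ : X} (hx₀ : x₀ ∈ s) (hpos : 0 < f x₀) {x : X} (hx : x ∈ s) : 0 < f x := by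
  by_contra! hle
  obtain ⟨y, hy, hy0⟩ := hs.intermediate_value hx hx₀ hf ⟨hle, hpos.le⟩
  exact hne y hy hy0

theorem div_three_le_sq_of_friedmann {H ρ φ a k L : ℝ} (hk : k ≤ 0) (hρ : 0 ≤ ρ) (hφ : L ≤ φ)
    (hH : H ^ 2 = 1 / 3 * (ρ + φ) - k / a ^ 2) : L / 3 ≤ H ^ 2 := by
  have hcurv : 0 ≤ -k / a ^ 2 := div_nonneg (neg_nonneg.mpr hk) (sq_nonneg a)
  rw [neg_div] at hcurv
  linarith

theorem monotoneOn_mul_exp_neg_of_hasDerivAt {a H : ℝ → ℝ} {c : ℝ}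
    (ha : ∀ t, 0 ≤ t → HasDerivAt a (H t * a t) t) (ha_nonneg : ∀ t, 0 ≤ t → 0 ≤ a t)
    (hH : ∀ t, 0 ≤ t → c ≤ H t) :
    MonotoneOn (fun t => a t * Real.exp (-c * t)) (Ici 0) := by
  have hderiv : ∀ t, 0 ≤ t →
      HasDerivAt (fun s => a s * Real.exp (-c * s)) ((H t - c) * (a t * Real.exp (-c * t))) t :=
    fun t ht => ((ha t ht).mul ((hasDerivAt_id t).const_mul (-c)).exp).congr_deriv
      (by simp only [id]; ring)
  refine monotoneOn_of_hasDerivWithinAt_nonneg (convex_Ici 0)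
    (fun t ht => (hderiv t ht).continuousAt.continuousWithinAt)
    (fun t ht => (hderiv t (interior_subset ht : t ∈ Ici 0)).hasDerivWithinAt) fun t ht => ?_
  have ht : (0 : ℝ) ≤ t := interior_subset ht
  exact mul_nonneg (sub_nonneg.mpr (hH t ht)) (mul_nonneg (ha_nonneg t ht) (Real.exp_pos _).le)

theorem mul_exp_le_of_hasDerivAt {a H : ℝ → ℝ} {c : ℝ}
    (ha : ∀ t, 0 ≤ t → HasDerivAt a (H t * a t) t) (ha_nonneg : ∀ t, 0 ≤ t → 0 ≤ a t)
    (hH : ∀ t, 0 ≤ t → c ≤ H t) {t : ℝ} (ht : 0 ≤ t) : a 0 * Real.exp (c * t) ≤ a t := by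
  have hmono := monotoneOn_mul_exp_neg_of_hasDerivAt ha ha_nonneg hH self_mem_Ici ht ht
  simp only [mul_zero, Real.exp_zero, mul_one, neg_mul, Real.exp_neg] at hmono
  rwa [le_mul_inv_iff₀ (Real.exp_pos _)] at hmono

theorem asymptotic_lower_bounds_general (k : ℝ) (hk : k = 0 ∨ k = -1)
    (H φ ρ a : ℝ → ℝ) (φinf : ℝ)
    (hH_cont : ContinuousOn H (Set.Ici (0 : ℝ)))
    (ha_pos : ∀ t : ℝ, 0 ≤ t → 0 < a t)
    (hconstraint : ∀ t : ℝ, 0 ≤ t →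
      H t ^ 2 = 1 / 3 * (ρ t + φ t) - k / a t ^ 2)
    (hρ_nonneg : ∀ t : ℝ, 0 ≤ t → 0 ≤ ρ t)
    (hφ_mono : AntitoneOn φ (Set.Ici (0 : ℝ)))
    (hφ_lim : Tendsto φ atTop (nhds φinf))
    (hH0 : 0 < H 0)
    (hH_ne : ∀ t : ℝ, 0 ≤ t → H t ≠ 0)
    (ha : ∀ t : ℝ, 0 ≤ t → HasDerivAt a (H t * a t) t) :
    (∀ t : ℝ, 0 ≤ t → H t ≥ Real.sqrt (φinf / 3)) ∧
      ∀ t : ℝ, 0 ≤ t → a t ≥ a 0 * Real.exp (Real.sqrt (φinf / 3) * t) := by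
  have hk_nonpos : k ≤ 0 := by rcases hk with rfl | rfl <;> norm_num
  have hH_sq : ∀ t, 0 ≤ t → φinf / 3 ≤ H t ^ 2 := fun t ht =>
    div_three_le_sq_of_friedmann hk_nonpos (hρ_nonneg t ht)
      (hφ_mono.le_of_tendsto_atTop ht hφ_lim) (hconstraint t ht)
  have hH_pos : ∀ t, 0 ≤ t → 0 < H t := fun t ht =>
    isPreconnected_Ici.pos_of_ne_zero hH_cont hH_ne self_mem_Ici hH0 ht
  have hH_ge : ∀ t, 0 ≤ t → Real.sqrt (φinf / 3) ≤ H t := fun t ht =>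
    (Real.sqrt_le_left (hH_pos t ht).le).mpr (hH_sq t ht)
  exact ⟨hH_ge, fun t ht =>
    mul_exp_le_of_hasDerivAt ha (fun s hs => (ha_pos s hs).le) hH_ge ht⟩

/-- Friedmann constraint with `k ≤ 0`, `ρ ≥ 0`, `φ` nonincreasing with
positive limit `φinf`, and `H` continuous, never vanishing, positive at `0`:
then `H(t) ≥ √(φinf/3)` and `a(t) ≥ a(0) e^{√(φinf/3) t}`. -/
theorem asymptotic_lower_bounds (k : ℝ) (hk : k = 0 ∨ k = -1)
    (H φ ρ a : ℝ → ℝ) (φinf : ℝ) (hφinf : 0 < φinf)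
    (hH_cont : ContinuousOn H (Set.Ici (0 : ℝ)))
    (hφ_cont : ContinuousOn φ (Set.Ici (0 : ℝ)))
    (hρ_cont : ContinuousOn ρ (Set.Ici (0 : ℝ)))
    (ha_cont : ContinuousOn a (Set.Ici (0 : ℝ)))
    (ha_pos : ∀ t : ℝ, 0 ≤ t → 0 < a t)
    (hconstraint : ∀ t : ℝ, 0 ≤ t →
      H t ^ 2 = 1 / 3 * (ρ t + φ t) - k / a t ^ 2)
    (hρ_nonneg : ∀ t : ℝ, 0 ≤ t → 0 ≤ ρ t)
    (hφ_mono : AntitoneOn φ (Set.Ici (0 : ℝ)))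
    (hφ_lim : Tendsto φ atTop (nhds φinf))
    (hH0 : 0 < H 0)
    (hH_ne : ∀ t : ℝ, 0 ≤ t → H t ≠ 0)
    (ha0 : 0 < a 0)
    (ha : ∀ t : ℝ, 0 ≤ t → HasDerivAt a (H t * a t) t) :
    (∀ t : ℝ, 0 ≤ t → H t ≥ Real.sqrt (φinf / 3)) ∧
      ∀ t : ℝ, 0 ≤ t → a t ≥ a 0 * Real.exp (Real.sqrt (φinf / 3) * t) :=
  asymptotic_lower_bounds_general k hk H φ ρ a φinf hH_cont ha_pos hconstraint hρ_nonneg hφ_mono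
    hφ_lim hH0 hH_ne ha
end

section
/- Let $\sigma, N, a_0, H_0 > 0$ and suppose $a(t) \le a_0 \exp(H_0 t + \frac{8}{27 N^2} t^2)$ for all $t \ge 0$, and $\dot\phi(t) = -3\sigma N a(t)^{-3}$. Then $\lim_{t\to\infty}\phi(t) \le \phi(0) - \frac{9\sigma N^2}{4 a_0^3}\sqrt{\frac{\pi}{2}}\, e^{x^2}\,\mathrm{Erfc}(x)$, where $x = \frac{9 H_0 N}{4\sqrt{2}}$ and $\mathrm{Erfc}$ is the complementary error function $\mathrm{Erfc}(x) = \frac{2}{\sqrt{\pi}}\int_x^\infty e^{-s^2} ds$. -/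
/-! Since `a ≤ a₀ exp(H₀ t + s² t² / 3)` with `s = 2√2 / (3N)`, the derivative of `φ` is bounded
above by `-(3σN / a₀³) exp(-(s² t² + 3H₀ t))`, so `lim φ - φ(0)` is at most the integral of this
Gaussian over `(0, ∞)`. Completing the square and substituting `u = s (t + 3H₀ / (2s²))` turns
that integral into `e^{x²} ∫_x^∞ e^{-u²} du / s` with `x = 3H₀ / (2s)`. -/

open Set Filter MeasureTheory

/-- Complementary error function `Erfc(x) = (2/√π) ∫_x^∞ e^{-s²} ds`. -/
noncomputable def Erfc (x : ℝ) : ℝ :=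
  2 / Real.sqrt Real.pi * ∫ s in Set.Ioi x, Real.exp (-s ^ 2)

theorem limit_le_add_integral_Ioi_of_hasDerivAt_le {φ φ' g : ℝ → ℝ} {L : ℝ}
    (hφ : ∀ t, 0 ≤ t → HasDerivAt φ (φ' t) t) (hφg : ∀ t, 0 ≤ t → φ' t ≤ g t)
    (hg : IntegrableOn g (Ioi 0)) (hL : Tendsto φ atTop (nhds L)) :
    L ≤ φ 0 + ∫ t in Ioi 0, g t := by
  have h_bound : ∀ t, 0 ≤ t → φ t ≤ φ 0 + ∫ u in (0 : ℝ)..t, g u := by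
    intro t ht
    have := intervalIntegral.sub_le_integral_of_hasDeriv_right_of_le ht
      (fun u hu => (hφ u hu.1).continuousAt.continuousWithinAt)
      (fun u hu => (hφ u hu.1.le).hasDerivWithinAt)
      ((integrableOn_Icc_iff_integrableOn_Ioc).mpr (hg.mono_set Ioc_subset_Ioi_self))
      (fun u hu => hφg u hu.1.le)
    linarith
  refine le_of_tendsto_of_tendsto hL
    (tendsto_const_nhds.add (intervalIntegral_tendsto_integral_Ioi 0 hg tendsto_id)) ?_
  filter_upwards [eventually_ge_atTop 0] with t ht using h_bound t ht

theorem exp_neg_sq_mul_sq_add_mul (s α t : ℝ) (hs : s ≠ 0) :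
    Real.exp (-(s ^ 2 * t ^ 2 + α * t))
      = Real.exp ((α / (2 * s)) ^ 2) * Real.exp (-(s * (t + α / (2 * s ^ 2))) ^ 2) := by
  rw [← Real.exp_add]
  congr 1
  field_simp
  ring

theorem integral_Ioi_exp_neg_sq_mul_sq_add_mul {s : ℝ} (hs : 0 < s) (α : ℝ) :
    ∫ t in Ioi 0, Real.exp (-(s ^ 2 * t ^ 2 + α * t))
      = Real.sqrt Real.pi / (2 * s) * Real.exp ((α / (2 * s)) ^ 2) * Erfc (α / (2 * s)) := by
  have h_shift : ∫ t in Ioi 0, Real.exp (-(s * (t + α / (2 * s ^ 2))) ^ 2)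
      = ∫ u in Ioi (α / (2 * s ^ 2)), Real.exp (-(s * u) ^ 2) := by
    have := (measurePreserving_add_right volume (α / (2 * s ^ 2))).setIntegral_preimage_emb
      (measurableEmbedding_addRight _) (fun u => Real.exp (-(s * u) ^ 2)) (Ioi (α / (2 * s ^ 2)))
    rwa [preimage_add_const_Ioi, sub_self] at this
  have h_scale : s * (α / (2 * s ^ 2)) = α / (2 * s) := by
    field_simp
  simp_rw [exp_neg_sq_mul_sq_add_mul s α _ hs.ne']
  rw [integral_const_mul, h_shift, integral_comp_mul_left_Ioi (fun u => Real.exp (-u ^ 2)) _ hs,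
    h_scale, smul_eq_mul, Erfc]
  have : Real.sqrt Real.pi ≠ 0 := (Real.sqrt_pos.mpr Real.pi_pos).ne'
  field_simp

theorem integrable_exp_neg_sq_mul_sq_add_mul {s : ℝ} (hs : s ≠ 0) (α : ℝ) :
    Integrable fun t => Real.exp (-(s ^ 2 * t ^ 2 + α * t)) := by
  simp_rw [exp_neg_sq_mul_sq_add_mul s α _ hs]
  refine Integrable.const_mul ?_ _
  have := ((integrable_exp_neg_mul_sq one_pos).comp_mul_left' hs).comp_add_right (α / (2 * s ^ 2))
  simpa [mul_pow] using this

theorem neg_div_pow_le_neg_div_mul_exp_neg {c A a₀ q : ℝ} (n : ℕ) (hc : 0 ≤ c) (hA : 0 < A)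
    (ha₀ : 0 < a₀) (h : A ≤ a₀ * Real.exp q) :
    -c / A ^ n ≤ -(c / a₀ ^ n) * Real.exp (-(n * q)) := by
  have : c / (a₀ * Real.exp q) ^ n ≤ c / A ^ n := by gcongr
  rw [mul_pow, ← Real.exp_nat_mul] at this
  rw [neg_div, neg_mul, neg_le_neg_iff, Real.exp_neg]
  convert this using 1
  field_simp

theorem phi_limit_erfc_bound_general (σ N a₀ H₀ : ℝ) (hσ : 0 < σ) (hN : 0 < N)
    (ha0 : 0 < a₀) (φ a : ℝ → ℝ)
    (ha_pos : ∀ t : ℝ, 0 ≤ t → 0 < a t)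
    (hφ : ∀ t : ℝ, 0 ≤ t → HasDerivAt φ (-(3 * σ * N) / a t ^ 3) t)
    (ha : ∀ t : ℝ, 0 ≤ t →
      a t ≤ a₀ * Real.exp (H₀ * t + 8 / (27 * N ^ 2) * t ^ 2)) :
    ∀ L : ℝ, Tendsto φ atTop (nhds L) →
      L ≤ φ 0 - 9 * σ * N ^ 2 / (4 * a₀ ^ 3) * Real.sqrt (Real.pi / 2) *
        Real.exp ((9 * H₀ * N / (4 * Real.sqrt 2)) ^ 2) *
        Erfc (9 * H₀ * N / (4 * Real.sqrt 2)) := by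
  intro L hL
  set s : ℝ := 2 * Real.sqrt 2 / (3 * N) with hs_def
  have hs : 0 < s := by positivity
  have hs_sq : s ^ 2 = 8 / (9 * N ^ 2) := by
    rw [hs_def, div_pow, mul_pow, Real.sq_sqrt zero_le_two]
    ring
  have hx : 3 * H₀ / (2 * s) = 9 * H₀ * N / (4 * Real.sqrt 2) := by
    rw [hs_def]
    field_simp
    ring
  have h_exponent : ∀ t, ((3 : ℕ) : ℝ) * (H₀ * t + 8 / (27 * N ^ 2) * t ^ 2)
      = s ^ 2 * t ^ 2 + 3 * H₀ * t := by
    intro t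
    rw [hs_sq]
    field_simp
    ring
  have h_deriv_le : ∀ t, 0 ≤ t → -(3 * σ * N) / a t ^ 3
      ≤ -(3 * σ * N / a₀ ^ 3) * Real.exp (-(s ^ 2 * t ^ 2 + 3 * H₀ * t)) := by
    intro t ht
    rw [← h_exponent]
    exact neg_div_pow_le_neg_div_mul_exp_neg 3 (by positivity) (ha_pos t ht) ha0 (ha t ht)
  have h_int : IntegrableOn
      (fun t => -(3 * σ * N / a₀ ^ 3) * Real.exp (-(s ^ 2 * t ^ 2 + 3 * H₀ * t))) (Ioi 0) :=
    (integrable_exp_neg_sq_mul_sq_add_mul hs.ne' (3 * H₀)).integrableOn.const_mul _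
  have := limit_le_add_integral_Ioi_of_hasDerivAt_le hφ h_deriv_le h_int hL
  rw [integral_const_mul, integral_Ioi_exp_neg_sq_mul_sq_add_mul hs, hx] at this
  refine this.trans_eq ?_
  rw [Real.sqrt_div Real.pi_pos.le, hs_def]
  field_simp
  ring

/-- Upper bound on the limit of `φ` in the closed case: if
`a(t) ≤ a₀ exp(H₀t + (8/27N²)t²)` and `φ' = -3σN a⁻³`, then
`lim φ ≤ φ(0) - (9σN²/4a₀³)√(π/2) e^{x²} Erfc(x)` with `x = 9H₀N/(4√2)`. -/
theorem phi_limit_erfc_bound (σ N a₀ H₀ : ℝ) (hσ : 0 < σ) (hN : 0 < N)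
    (ha0 : 0 < a₀) (hH0 : 0 < H₀) (φ a : ℝ → ℝ)
    (ha_pos : ∀ t : ℝ, 0 ≤ t → 0 < a t)
    (hφ : ∀ t : ℝ, 0 ≤ t → HasDerivAt φ (-(3 * σ * N) / a t ^ 3) t)
    (ha : ∀ t : ℝ, 0 ≤ t →
      a t ≤ a₀ * Real.exp (H₀ * t + 8 / (27 * N ^ 2) * t ^ 2)) :
    ∀ L : ℝ, Tendsto φ atTop (nhds L) →
      L ≤ φ 0 - 9 * σ * N ^ 2 / (4 * a₀ ^ 3) * Real.sqrt (Real.pi / 2) *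
        Real.exp ((9 * H₀ * N / (4 * Real.sqrt 2)) ^ 2) *
        Erfc (9 * H₀ * N / (4 * Real.sqrt 2)) :=
  phi_limit_erfc_bound_general σ N a₀ H₀ hσ hN ha0 φ a ha_pos hφ ha
end
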